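/- arXiv:1703.03404 — 2 statements merged into one kernel-verified Lean document; each statement's English description precedes it below -/
import Mathlib

section
/- Let φ : ℝ^d → ℝ be C² with bounded Hessian, and suppose for some constant C ≥ 0 the remainder bound |∇φ(x) - ∇φ(y) - D²φ(y)(x-y)| ≤ C|x-y|² holds for all x, y. If X, Y : [0,T] → ℝ^d are C² curves and η(t) = ½|X'-Y'|² + φ(X) - φ(Y) - ∇φ(Y)·(X-Y) satisfies η(t) ≥ (r/2)|X-Y|² for some r > 0, then η'(t) ≤ (X'-Y')·(ω_X - ω_Y) + C'·η(t) where ω_Z = Z'' + ∇φ(Z) and C' depends only on C, r and sup|Y'|. -/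
/-!
Differentiating `η` and moving the Hessian term onto `Y'` by the symmetry of `D²φ` gives
`η' = (X' - Y')·(ω_X - ω_Y) + ⟪∇φ(X) - ∇φ(Y) - D²φ(Y)(X - Y), Y'⟫`.
By the remainder bound the last term is at most `C M |X - Y|²`, and the coercivity
`η ≥ (r/2)|X - Y|²` turns this into `(2 C M / r) η`.
-/

open RealInnerProductSpace

theorem hasDerivAt_deriv_of_contDiff_two {F : Type*} [NormedAddCommGroup F] [NormedSpace ℝ F]
    {Z : ℝ → F} (hZ : ContDiff ℝ 2 Z) (t : ℝ) :
    HasDerivAt (deriv Z) (deriv (deriv Z) t) t :=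
  ((hZ.deriv' (n := 1)).differentiable one_ne_zero t).hasDerivAt

section

variable {E : Type*} [NormedAddCommGroup E] [InnerProductSpace ℝ E] [CompleteSpace E]

theorem contDiff_one_gradient {φ : E → ℝ} (hφ : ContDiff ℝ 2 φ) : ContDiff ℝ 1 (gradient φ) :=
  (InnerProductSpace.toDual ℝ E).symm.contDiff.comp (hφ.fderiv_right (by norm_num))

theorem inner_fderiv_gradient_comm {φ : E → ℝ} (hφ : ContDiff ℝ 2 φ) (p u v : E) :
    ⟪fderiv ℝ (gradient φ) p u, v⟫ = ⟪fderiv ℝ (gradient φ) p v, u⟫ := by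
  let e : StrongDual ℝ E ≃ₗᵢ[ℝ] E := (InnerProductSpace.toDual ℝ E).symm
  have hcomp : fderiv ℝ (gradient φ) p
      = (e : StrongDual ℝ E →L[ℝ] E).comp (fderiv ℝ (fderiv ℝ φ) p) :=
    e.comp_fderiv
  rw [hcomp]
  change ⟪e _, v⟫ = ⟪e _, u⟫
  rw [InnerProductSpace.toDual_symm_apply, InnerProductSpace.toDual_symm_apply]
  exact (hφ.contDiffAt (x := p)).isSymmSndFDerivAt (by simp) u v

theorem HasGradientAt.comp_hasDerivAt {φ : E → ℝ} {g : E} {Z : ℝ → E} {Z' : E} {t : ℝ}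
    (hφ : HasGradientAt φ g (Z t)) (hZ : HasDerivAt Z Z' t) :
    HasDerivAt (fun s => φ (Z s)) ⟪g, Z'⟫ t := by
  have h := hφ.hasFDerivAt.comp_hasDerivAt t hZ
  rwa [InnerProductSpace.toDual_apply_apply] at h

noncomputable def modulatedEnergy (φ : E → ℝ) (X Y : ℝ → E) (t : ℝ) : ℝ :=
  (1 / 2) * ‖deriv X t - deriv Y t‖ ^ 2 + φ (X t) - φ (Y t) - ⟪gradient φ (Y t), X t - Y t⟫

theorem hasDerivAt_modulatedEnergy {φ : E → ℝ} (hφ : ContDiff ℝ 2 φ) {X Y : ℝ → E}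
    (hX : ContDiff ℝ 2 X) (hY : ContDiff ℝ 2 Y) (t : ℝ) :
    HasDerivAt (modulatedEnergy φ X Y)
      (⟪deriv X t - deriv Y t,
          (deriv (deriv X) t + gradient φ (X t)) - (deriv (deriv Y) t + gradient φ (Y t))⟫
        + ⟪gradient φ (X t) - gradient φ (Y t) - fderiv ℝ (gradient φ) (Y t) (X t - Y t),
            deriv Y t⟫) t := by
  have hXt : HasDerivAt X (deriv X t) t := (hX.differentiable two_ne_zero t).hasDerivAt
  have hYt : HasDerivAt Y (deriv Y t) t := (hY.differentiable two_ne_zero t).hasDerivAt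
  have hGY : HasDerivAt (fun s => gradient φ (Y s)) (fderiv ℝ (gradient φ) (Y t) (deriv Y t)) t :=
    ((contDiff_one_gradient hφ).differentiable one_ne_zero (Y t)).hasFDerivAt.comp_hasDerivAt t hYt
  have hkin := ((hasDerivAt_deriv_of_contDiff_two hX t).sub
    (hasDerivAt_deriv_of_contDiff_two hY t)).norm_sq
  have hφd := hφ.differentiable two_ne_zero
  have hraw := (((hkin.const_mul (1 / 2)).add ((hφd _).hasGradientAt.comp_hasDerivAt hXt)).sub
    ((hφd _).hasGradientAt.comp_hasDerivAt hYt)).sub (hGY.inner ℝ (hXt.sub hYt))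
  refine hraw.congr_deriv ?_
  have hsymm := inner_fderiv_gradient_comm hφ (Y t) (deriv Y t) (X t - Y t)
  simp only [Pi.sub_apply, inner_sub_left, inner_sub_right, inner_add_right, map_sub] at hsymm ⊢
  simp only [real_inner_comm (gradient φ (X t)), real_inner_comm (gradient φ (Y t)),
    real_inner_comm (deriv (deriv X) t), real_inner_comm (deriv (deriv Y) t)]
  linarith

end

/-- Differential inequality for the modulated energy:
`η' ≤ (X'-Y')·(ω_X - ω_Y) + C'·η` on `[0,T]`, with `ω_Z = Z'' + ∇φ(Z)` and `C'`
depending only on the remainder constant `C`, `r` and a bound on `Y'`. -/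
theorem stmt5 {d : ℕ} (φ : EuclideanSpace ℝ (Fin d) → ℝ)
    (C r T M : ℝ) (hC : 0 ≤ C) (hr : 0 < r) (hT : 0 < T)
    (hφ : ContDiff ℝ 2 φ)
    (hrem : ∀ x y : EuclideanSpace ℝ (Fin d),
      ‖gradient φ x - gradient φ y - fderiv ℝ (gradient φ) y (x - y)‖ ≤ C * ‖x - y‖ ^ 2)
    (X Y : ℝ → EuclideanSpace ℝ (Fin d))
    (hX : ContDiff ℝ 2 X) (hY : ContDiff ℝ 2 Y)
    (hY' : ∀ t ∈ Set.Icc (0:ℝ) T, ‖deriv Y t‖ ≤ M)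
    (η : ℝ → ℝ)
    (hη : ∀ t, η t = (1 / 2) * ‖deriv X t - deriv Y t‖ ^ 2
      + φ (X t) - φ (Y t) - ⟪gradient φ (Y t), X t - Y t⟫)
    (hlow : ∀ t ∈ Set.Icc (0:ℝ) T, (r / 2) * ‖X t - Y t‖ ^ 2 ≤ η t) :
    ∃ C' : ℝ, 0 ≤ C' ∧
      (∀ t ∈ Set.Icc (0:ℝ) T,
        deriv η t ≤
          ⟪deriv X t - deriv Y t,
            (deriv (deriv X) t + gradient φ (X t))
              - (deriv (deriv Y) t + gradient φ (Y t))⟫ + C' * η t) := by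
  have hM : 0 ≤ M := (norm_nonneg _).trans (hY' 0 ⟨le_rfl, hT.le⟩)
  have hη_eq : η = modulatedEnergy φ X Y := funext hη
  refine ⟨2 * C * M / r, by positivity, fun t ht => ?_⟩
  rw [hη_eq, (hasDerivAt_modulatedEnergy hφ hX hY t).deriv, ← hη_eq]
  gcongr _ + ?_
  calc _ ≤ ‖gradient φ (X t) - gradient φ (Y t) - fderiv ℝ (gradient φ) (Y t) (X t - Y t)‖
          * ‖deriv Y t‖ := real_inner_le_norm _ _
    _ ≤ C * ‖X t - Y t‖ ^ 2 * M := by gcongr; exacts [hrem _ _, hY' t ht]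
    _ = 2 * C * M / r * (r / 2 * ‖X t - Y t‖ ^ 2) := by field_simp
    _ ≤ 2 * C * M / r * η t := by gcongr; exact hlow t ht
end

section
/- Suppose φ : ℝ^d → ℝ is C² with r·I ≤ D²φ ≤ r⁻¹·I (0 < r < 1/2) and bounded third derivatives. Let X solve X'' = -∇φ(X) with X(0) = x₀, X'(0) = 0, and let Z solve Z' = -∇φ(Z) with Z(0) = x₀. Then for every T > 0 there exists C (depending on T, φ, Z) such that |X(t) - Z(t²/2)|² + |X'(t) - t·Z'(t²/2)|² ≤ C·t⁵ for all t ∈ [0,T]. -/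
/-!
Put `W(t) = Z(t²/2)`, `F = X - W` and `G = F' = X' + t ∇φ(W)`. Then `F(0) = G(0) = 0` and
`G' = ∇φ(W) - ∇φ(X) - t² D∇φ(W) ∇φ(W)`, so on `[0, T]`, where `∇φ` is Lipschitz on the
(compact) ranges of `X` and `W`, `‖G'‖ ≤ L ‖F‖ + B t²`. Integrating twice from `0` turns a
bound `‖G'‖ ≤ c tⁿ` into `‖G‖ ≲ tⁿ⁺¹`, `‖F‖ ≲ tⁿ⁺²`; starting from the crude bound
`‖F‖ ≤ C₀` and feeding the result back once gives `‖F‖ ≲ t⁴`, `‖G‖ ≲ t³`, hence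
`‖F‖² + ‖G‖² ≲ t⁵` on `[0, T]`.
-/

open RealInnerProductSpace Set

theorem sq_add_sq_le_pow_five {x y a t T : ℝ} (ht : t ∈ Icc 0 T) (hx : 0 ≤ x) (hy : 0 ≤ y)
    (hxt : x ≤ a * t ^ 4) (hyt : y ≤ a * t ^ 3) :
    x ^ 2 + y ^ 2 ≤ a ^ 2 * (T ^ 3 + T) * t ^ 5 := by
  have h3 : t ^ 3 ≤ T ^ 3 := pow_le_pow_left₀ ht.1 ht.2 3
  have ht5 : 0 ≤ t ^ 5 := pow_nonneg ht.1 5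
  calc x ^ 2 + y ^ 2 ≤ (a * t ^ 4) ^ 2 + (a * t ^ 3) ^ 2 := by gcongr
    _ = a ^ 2 * (t ^ 3 * t ^ 5 + t * t ^ 5) := by ring
    _ ≤ a ^ 2 * (T ^ 3 * t ^ 5 + T * t ^ 5) := by gcongr; exact ht.2
    _ = a ^ 2 * (T ^ 3 + T) * t ^ 5 := by ring

theorem ContDiff.gradient {F : Type*} [NormedAddCommGroup F] [InnerProductSpace ℝ F]
    [CompleteSpace F] {φ : F → ℝ} {n : WithTop ℕ∞} (hφ : ContDiff ℝ (n + 1) φ) :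
    ContDiff ℝ n (gradient φ) :=
  (InnerProductSpace.toDual ℝ F).symm.contDiff.comp (hφ.fderiv_right le_rfl)

section

variable {E : Type*} [NormedAddCommGroup E] [NormedSpace ℝ E]

theorem norm_le_of_norm_deriv_le_pow {f f' : ℝ → E} {c T : ℝ} {n : ℕ}
    (hf : ∀ t ∈ Icc 0 T, HasDerivAt f (f' t) t) (hf0 : f 0 = 0)
    (hf' : ∀ t ∈ Icc 0 T, ‖f' t‖ ≤ c * t ^ n) :
    ∀ t ∈ Icc 0 T, ‖f t‖ ≤ c / (n + 1) * t ^ (n + 1) := by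
  have hB : ∀ t : ℝ, HasDerivAt (fun s => c / (n + 1) * s ^ (n + 1)) (c * t ^ n) t := by
    intro t
    refine ((hasDerivAt_pow (n + 1) t).const_mul (c / (n + 1))).congr_deriv ?_
    rw [Nat.add_sub_cancel]
    push_cast
    field_simp
  exact image_norm_le_of_norm_deriv_right_le_deriv_boundary
    (fun t ht => (hf t ht).continuousAt.continuousWithinAt)
    (fun t ht => (hf t (Ico_subset_Icc_self ht)).hasDerivWithinAt)
    (by simp [hf0]) hB (fun t ht => hf' t (Ico_subset_Icc_self ht))

theorem norm_le_of_norm_deriv_deriv_le_pow {F G G' : ℝ → E} {c T : ℝ} {n : ℕ}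
    (hF : ∀ t ∈ Icc 0 T, HasDerivAt F (G t) t) (hG : ∀ t ∈ Icc 0 T, HasDerivAt G (G' t) t)
    (hF0 : F 0 = 0) (hG0 : G 0 = 0) (hG' : ∀ t ∈ Icc 0 T, ‖G' t‖ ≤ c * t ^ n) :
    ∀ t ∈ Icc 0 T,
      ‖F t‖ ≤ c / (n + 1) / (n + 2) * t ^ (n + 2) ∧ ‖G t‖ ≤ c / (n + 1) * t ^ (n + 1) := by
  have hGt := norm_le_of_norm_deriv_le_pow hG hG0 hG'
  have hFt := norm_le_of_norm_deriv_le_pow (n := n + 1) hF hF0 hGt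
  intro t ht
  refine ⟨?_, hGt t ht⟩
  convert hFt t ht using 2
  push_cast
  ring

theorem exists_norm_le_pow_of_norm_deriv_deriv_le {F G G' : ℝ → E} {L K T : ℝ}
    (hF : ∀ t ∈ Icc 0 T, HasDerivAt F (G t) t) (hG : ∀ t ∈ Icc 0 T, HasDerivAt G (G' t) t)
    (hF0 : F 0 = 0) (hG0 : G 0 = 0) (hL : 0 ≤ L)
    (hG' : ∀ t ∈ Icc 0 T, ‖G' t‖ ≤ L * ‖F t‖ + K * t ^ 2) :
    ∃ a, ∀ t ∈ Icc 0 T, ‖F t‖ ≤ a * t ^ 4 ∧ ‖G t‖ ≤ a * t ^ 3 := by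
  obtain ⟨C₀, hC₀⟩ := isCompact_Icc.exists_bound_of_continuousOn
    fun t ht => (hF t ht).continuousAt.continuousWithinAt
  set c₁ := L * C₀ + |K| * T ^ 2
  have h₁ := norm_le_of_norm_deriv_deriv_le_pow (n := 0) (c := c₁) hF hG hF0 hG0 fun s hs => by
    have hKs : K * s ^ 2 ≤ |K| * T ^ 2 := by
      have : s ^ 2 ≤ T ^ 2 := pow_le_pow_left₀ hs.1 hs.2 2
      nlinarith [le_abs_self K, abs_nonneg K, sq_nonneg s]
    calc ‖G' s‖ ≤ L * ‖F s‖ + K * s ^ 2 := hG' s hs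
      _ ≤ L * C₀ + |K| * T ^ 2 := add_le_add (mul_le_mul_of_nonneg_left (hC₀ s hs) hL) hKs
      _ = c₁ * s ^ 0 := by ring
  have hF₁ : ∀ t ∈ Icc 0 T, ‖F t‖ ≤ c₁ / 2 * t ^ 2 := fun t ht => (h₁ t ht).1.trans_eq (by ring)
  set c₂ := L * (c₁ / 2) + K
  have h₂ := norm_le_of_norm_deriv_deriv_le_pow (n := 2) (c := c₂) hF hG hF0 hG0 fun s hs =>
    calc ‖G' s‖ ≤ L * ‖F s‖ + K * s ^ 2 := hG' s hs
      _ ≤ L * (c₁ / 2 * s ^ 2) + K * s ^ 2 := by gcongr; exact hF₁ s hs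
      _ = c₂ * s ^ 2 := by ring
  refine ⟨|c₂|, fun t ht =>
    ⟨(h₂ t ht).1.trans (mul_le_mul_of_nonneg_right ?_ (pow_nonneg ht.1 _)),
      (h₂ t ht).2.trans (mul_le_mul_of_nonneg_right ?_ (pow_nonneg ht.1 _))⟩⟩ <;>
  · norm_num
    linarith [le_abs_self c₂, abs_nonneg c₂]

theorem exists_norm_sq_sub_flow_comp_half_sq_le {g : E → E} (hg : ContDiff ℝ 1 g) {X V Z : ℝ → E}
    (hX : ∀ t, HasDerivAt X (V t) t) (hV : ∀ t, HasDerivAt V (-g (X t)) t)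
    (hZ : ∀ θ, HasDerivAt Z (-g (Z θ)) θ) (hXZ0 : X 0 = Z 0) (hV0 : V 0 = 0) (T : ℝ) :
    ∃ C, ∀ t ∈ Icc 0 T,
      ‖X t - Z (t ^ 2 / 2)‖ ^ 2 + ‖V t + t • g (Z (t ^ 2 / 2))‖ ^ 2 ≤ C * t ^ 5 := by
  set W : ℝ → E := fun t => Z (t ^ 2 / 2)
  have hW : ∀ t, HasDerivAt W (t • -g (W t)) t := fun t => by
    have hq : HasDerivAt (fun s : ℝ => s ^ 2 / 2) t t := by
      simpa using (hasDerivAt_pow 2 t).div_const 2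
    exact (hZ _).scomp t hq
  set G' : ℝ → E := fun t => g (W t) - g (X t) - t ^ 2 • fderiv ℝ g (W t) (g (W t))
  have hF : ∀ t ∈ Icc 0 T, HasDerivAt (fun t => X t - W t) (V t + t • g (W t)) t :=
    fun t _ => ((hX t).sub (hW t)).congr_deriv (by rw [smul_neg, sub_neg_eq_add])
  have hG : ∀ t ∈ Icc 0 T, HasDerivAt (fun t => V t + t • g (W t)) (G' t) t := fun t _ => by
    have hgW := (hg.differentiable one_ne_zero (W t)).hasFDerivAt.comp_hasDerivAt t (hW t)
    refine ((hV t).add ((hasDerivAt_id t).smul hgW)).congr_deriv ?_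
    simp only [G', id, Function.comp_apply, map_smul, map_neg, smul_smul, one_smul]
    module
  have hXc : Continuous X := continuous_iff_continuousAt.2 fun t => (hX t).continuousAt
  have hWc : Continuous W := continuous_iff_continuousAt.2 fun t => (hW t).continuousAt
  obtain ⟨L, hL⟩ := hg.locallyLipschitz.locallyLipschitzOn.exists_lipschitzOnWith_of_compact
    ((isCompact_Icc.image hXc).union (isCompact_Icc.image hWc) : IsCompact (X '' Icc 0 T ∪ _))
  obtain ⟨B, hB⟩ := isCompact_Icc.exists_bound_of_continuousOn (s := Icc (0 : ℝ) T)
    (((hg.continuous_fderiv one_ne_zero).comp hWc).clm_apply (hg.continuous.comp hWc)).continuousOn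
  have hG' : ∀ t ∈ Icc 0 T, ‖G' t‖ ≤ L * ‖X t - W t‖ + B * t ^ 2 := fun t ht =>
    calc ‖G' t‖ ≤ ‖g (W t) - g (X t)‖ + ‖t ^ 2 • fderiv ℝ g (W t) (g (W t))‖ :=
          norm_sub_le _ _
      _ ≤ L * ‖X t - W t‖ + B * t ^ 2 := by
        gcongr
        · rw [norm_sub_rev]
          exact hL.norm_sub_le (Or.inl ⟨t, ht, rfl⟩) (Or.inr ⟨t, ht, rfl⟩)
        · rw [norm_smul, Real.norm_of_nonneg (sq_nonneg t), mul_comm]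
          gcongr
          exact hB t ht
  obtain ⟨a, ha⟩ := exists_norm_le_pow_of_norm_deriv_deriv_le hF hG (by simp [W, hXZ0])
    (by simp [hV0]) L.coe_nonneg hG'
  exact ⟨a ^ 2 * (T ^ 3 + T), fun t ht =>
    sq_add_sq_le_pow_five ht (norm_nonneg _) (norm_nonneg _) (ha t ht).1 (ha t ht).2⟩

end

theorem stmt6_general {d : ℕ} (φ : EuclideanSpace ℝ (Fin d) → ℝ)
    (hφ : ContDiff ℝ 3 φ)
    (x₀ : EuclideanSpace ℝ (Fin d))
    (X Z : ℝ → EuclideanSpace ℝ (Fin d))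
    (hX : ContDiff ℝ 2 X) (hZ : ContDiff ℝ 1 Z)
    (hXeq : ∀ t, deriv (deriv X) t = -gradient φ (X t))
    (hX0 : X 0 = x₀) (hX'0 : deriv X 0 = 0)
    (hZeq : ∀ θ, deriv Z θ = -gradient φ (Z θ)) (hZ0 : Z 0 = x₀) :
    ∀ T > (0:ℝ), ∃ C : ℝ, ∀ t ∈ Set.Icc (0:ℝ) T,
      ‖X t - Z (t ^ 2 / 2)‖ ^ 2 + ‖deriv X t - t • deriv Z (t ^ 2 / 2)‖ ^ 2
        ≤ C * t ^ 5 := by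
  intro T _
  have hgrad : ContDiff ℝ 1 (gradient φ) := ContDiff.gradient (hφ.of_le (by norm_num))
  have hX' : ContDiff ℝ 1 (deriv X) :=
    (contDiff_succ_iff_deriv.1 (show ContDiff ℝ (1 + 1) X from hX)).2.2
  obtain ⟨C, hC⟩ := exists_norm_sq_sub_flow_comp_half_sq_le hgrad
    (fun t => (hX.differentiable (by norm_num) t).hasDerivAt)
    (fun t => hXeq t ▸ (hX'.differentiable one_ne_zero t).hasDerivAt)
    (fun θ => hZeq θ ▸ (hZ.differentiable one_ne_zero θ).hasDerivAt) (hX0.trans hZ0.symm) hX'0 T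
  refine ⟨C, fun t ht => ?_⟩
  simpa only [hZeq, smul_neg, sub_neg_eq_add] using hC t ht

/-- Comparison of Newton's flow (zero initial velocity) with the gradient flow under the
quadratic change of time: `|X(t)-Z(t²/2)|² + |X'(t) - t Z'(t²/2)|² ≤ C t⁵` on `[0,T]`. -/
theorem stmt6 {d : ℕ} (φ : EuclideanSpace ℝ (Fin d) → ℝ) (r M : ℝ)
    (hr0 : 0 < r) (hr : r < 1 / 2)
    (hφ : ContDiff ℝ 3 φ)
    (hess_lb : ∀ x v : EuclideanSpace ℝ (Fin d),
      r * ‖v‖ ^ 2 ≤ ⟪fderiv ℝ (gradient φ) x v, v⟫)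
    (hess_ub : ∀ x v : EuclideanSpace ℝ (Fin d),
      ⟪fderiv ℝ (gradient φ) x v, v⟫ ≤ r⁻¹ * ‖v‖ ^ 2)
    (h3 : ∀ x, ‖iteratedFDeriv ℝ 3 φ x‖ ≤ M)
    (x₀ : EuclideanSpace ℝ (Fin d))
    (X Z : ℝ → EuclideanSpace ℝ (Fin d))
    (hX : ContDiff ℝ 2 X) (hZ : ContDiff ℝ 1 Z)
    (hXeq : ∀ t, deriv (deriv X) t = -gradient φ (X t))
    (hX0 : X 0 = x₀) (hX'0 : deriv X 0 = 0)
    (hZeq : ∀ θ, deriv Z θ = -gradient φ (Z θ)) (hZ0 : Z 0 = x₀) :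
    ∀ T > (0:ℝ), ∃ C : ℝ, ∀ t ∈ Set.Icc (0:ℝ) T,
      ‖X t - Z (t ^ 2 / 2)‖ ^ 2 + ‖deriv X t - t • deriv Z (t ^ 2 / 2)‖ ^ 2
        ≤ C * t ^ 5 :=
  stmt6_general φ hφ x₀ X Z hX hZ hXeq hX0 hX'0 hZeq hZ0
end
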